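/- For any irrational α and any non-degenerate chord with endpoints x ≠ y in ℝ/ℤ, there exists n ≥ 1 such that the chords {x, y} and {x + nα, y + nα} are linked, i.e. exactly one of x+nα, y+nα lies in the open arc (x,y). -/

import Mathlib

/-- `x` lies in the open positively oriented arc from `a` to `b` on `ℝ/ℤ`. -/
def inOpenArc (a b x : AddCircle (1 : ℝ)) : Prop :=
  ∃ u v : ℝ, 0 < u ∧ u < v ∧ v < 1 ∧ b = a + ((v : ℝ) : AddCircle (1 : ℝ)) ∧
    x = a + ((u : ℝ) : AddCircle (1 : ℝ))

/-- On `AddCircle 1`, two reals give the same point iff they differ by an integer. -/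
lemma addCircle_coe_eq_coe_iff (a b : ℝ) :
    ((a : AddCircle (1 : ℝ)) = b) ↔ ∃ k : ℤ, b - a = k := by
  rw [QuotientAddGroup.eq_iff_sub_mem, AddSubgroup.mem_zmultiples_iff]
  constructor
  · rintro ⟨k, hk⟩
    refine ⟨-k, ?_⟩
    have : (k : ℝ) * 1 = a - b := by simpa using hk
    push_cast
    linarith
  · rintro ⟨k, hk⟩
    refine ⟨-k, ?_⟩
    simp only [zsmul_eq_mul]
    push_cast
    linarith

/-- If two reals in `(-1, 1)` differ by an integer, they are equal. -/
lemma int_diff_small {a b : ℝ} (k : ℤ) (hk : b - a = k) (h1 : b - a < 1) (h2 : -1 < b - a) :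
    b = a := by
  have hk1 : k < 1 := by exact_mod_cast hk ▸ h1
  have hk2 : (-1 : ℤ) < k := by exact_mod_cast hk ▸ h2
  have : k = 0 := by omega
  rw [this] at hk
  push_cast at hk
  linarith

/-- Characterization of the open arc from `x` to `x + d` with `d ∈ (0,1)`. -/
lemma inOpenArc_iff (x : AddCircle (1 : ℝ)) (d : ℝ) (hd0 : 0 < d) (hd1 : d < 1)
    (z : AddCircle (1 : ℝ)) :
    inOpenArc x (x + (d : AddCircle (1 : ℝ))) z ↔
      ∃ u : ℝ, 0 < u ∧ u < d ∧ z = x + (u : AddCircle (1 : ℝ)) := by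
  constructor
  · rintro ⟨u, v, hu0, huv, hv1, hb, hz⟩
    have hv : ((d : ℝ) : AddCircle (1 : ℝ)) = v := add_left_cancel hb
    obtain ⟨k, hk⟩ := (addCircle_coe_eq_coe_iff d v).mp hv
    have hvd : v = d := int_diff_small k hk (by linarith [lt_trans hu0 huv]) (by linarith)
    exact ⟨u, hu0, hvd ▸ huv, hz⟩
  · rintro ⟨u, hu0, hud, hz⟩
    exact ⟨u, d, hu0, hud, hd1, rfl, hz⟩

/-- For irrational `α` and `ε > 0`, some positive multiple of `α` is within `ε` of `0 (mod 1)`. -/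
lemma exists_fract_small (α : ℝ) (hα : Irrational α) {ε : ℝ} (hε : 0 < ε) :
    ∃ n : ℕ, 1 ≤ n ∧ (Int.fract ((n : ℝ) * α) < ε ∨ 1 - ε < Int.fract ((n : ℝ) * α)) := by
  obtain ⟨N, hN⟩ := exists_nat_gt (1 / ε)
  have hN0 : 0 < N := by
    by_contra h
    push_neg at h
    interval_cases N
    simp at hN
    linarith [one_div_pos.mpr hε, hN]
  obtain ⟨j, k, hk0, hkN, hjk⟩ := Real.exists_int_int_abs_mul_sub_le α hN0
  refine ⟨k.toNat, by omega, ?_⟩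
  have hkc : ((k.toNat : ℕ) : ℝ) = (k : ℝ) :=
    mod_cast congrArg (Int.cast : ℤ → ℝ) (Int.toNat_of_nonneg hk0.le)
  rw [hkc]
  have hNN : (1 : ℝ) / (N + 1) < ε := by
    rw [div_lt_iff₀ (by positivity)]
    have h1 : 1 / ε < (N : ℝ) + 1 := by linarith
    calc (1 : ℝ) = ε * (1 / ε) := by field_simp
    _ < ε * ((N : ℝ) + 1) := mul_lt_mul_of_pos_left h1 hε
  have hsmall : |(k : ℝ) * α - j| < ε := lt_of_le_of_lt hjk hNN
  have hone : |(k : ℝ) * α - j| < 1 := by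
    refine lt_of_le_of_lt hjk ?_
    rw [div_lt_one (by positivity)]
    have : (1 : ℝ) ≤ N := by exact_mod_cast hN0
    linarith
  obtain ⟨hs1, hs2⟩ := abs_lt.mp hsmall
  obtain ⟨ho1, ho2⟩ := abs_lt.mp hone
  have hne : (k : ℝ) * α - j ≠ 0 := by
    intro h
    have : (k : ℝ) * α = j := by linarith
    exact (hα.intCast_mul (by exact_mod_cast hk0.ne')).ne_int j this
  rcases lt_or_gt_of_ne hne with h | h
  · right
    have hfr : Int.fract ((k : ℝ) * α) = (k : ℝ) * α - j + 1 := by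
      have hfl : (j : ℤ) - 1 = ⌊(k : ℝ) * α⌋ := by
        symm
        apply Int.floor_eq_iff.mpr
        constructor <;> push_cast <;> linarith
      rw [Int.fract, ← hfl]; push_cast; ring
    rw [hfr]; linarith
  · left
    have hfr : Int.fract ((k : ℝ) * α) = (k : ℝ) * α - j := by
      have hfl : (j : ℤ) = ⌊(k : ℝ) * α⌋ := by
        symm
        apply Int.floor_eq_iff.mpr
        constructor <;> · push_cast; linarith
      rw [Int.fract, ← hfl]
    rw [hfr]; linarith

/-- For an irrational rotation number `α` and any non-degenerate chord
`xy` of `ℝ/ℤ`, some forward rotate of the chord crosses it: there is `n ≥ 1` such that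
exactly one of `x + nα`, `y + nα` lies in the open arc `(x, y)`. -/
theorem stmt15 (α : ℝ) (hα : Irrational α) (x y : AddCircle (1 : ℝ)) (hxy : x ≠ y) :
    ∃ n : ℕ, 1 ≤ n ∧
      Xor' (inOpenArc x y (x + (((n : ℝ) * α : ℝ) : AddCircle (1 : ℝ))))
           (inOpenArc x y (y + (((n : ℝ) * α : ℝ) : AddCircle (1 : ℝ)))) := by
  -- choose d ∈ (0,1) with y = x + d
  obtain ⟨d, hd01, hyd⟩ : ∃ d : ℝ, d ∈ Set.Ico (0:ℝ) 1 ∧ y = x + (d : AddCircle (1:ℝ)) := by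
    obtain ⟨⟨d, hd⟩, hd'⟩ : ∃ z : Set.Ico (0:ℝ) (0 + 1), (AddCircle.equivIco 1 0).symm z = y - x :=
      ⟨AddCircle.equivIco 1 0 (y - x), (AddCircle.equivIco 1 0).left_inv _⟩
    refine ⟨d, by simpa using hd, ?_⟩
    have : ((d : ℝ) : AddCircle (1:ℝ)) = y - x := hd'
    rw [this]; abel
  have hd0 : 0 < d := by
    rcases hd01.1.lt_or_eq with h | h
    · exact h
    · exfalso; apply hxy; rw [hyd, ← h]; simp
  have hd1 : d < 1 := hd01.2
  set ε := min d (1 - d) with hε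
  have hε0 : 0 < ε := lt_min hd0 (by linarith)
  obtain ⟨n, hn1, hfr⟩ := exists_fract_small α hα hε0
  set t := Int.fract ((n : ℝ) * α) with ht
  have ht0 : 0 ≤ t := Int.fract_nonneg _
  have ht1 : t < 1 := Int.fract_lt_one _
  have htpos : 0 < t := by
    rcases ht0.lt_or_eq with h | h
    · exact h
    · exfalso
      have h3 := Int.fract_add_floor ((n : ℝ) * α)
      rw [← ht, ← h] at h3
      have : (n : ℝ) * α = ⌊(n : ℝ) * α⌋ := by linarith
      exact (hα.natCast_mul (by omega)).ne_int _ this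
  -- nα ≡ t (mod 1)
  have hcoe : (((n : ℝ) * α : ℝ) : AddCircle (1:ℝ)) = (t : AddCircle (1:ℝ)) := by
    symm
    rw [addCircle_coe_eq_coe_iff]
    exact ⟨⌊(n : ℝ) * α⌋, by rw [ht, Int.self_sub_fract]⟩
  refine ⟨n, hn1, ?_⟩
  rw [hyd, hcoe]
  rcases hfr with hsmall | hbig
  · -- t < ε ≤ min d (1-d): x+t in arc, y+t not
    have htd : t < d := lt_of_lt_of_le hsmall (min_le_left _ _)
    have htd' : t < 1 - d := lt_of_lt_of_le hsmall (min_le_right _ _)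
    left
    constructor
    · exact (inOpenArc_iff x d hd0 hd1 _).mpr ⟨t, htpos, htd, rfl⟩
    · intro hmem
      obtain ⟨u, hu0, hud, hu⟩ := (inOpenArc_iff x d hd0 hd1 _).mp hmem
      have hc : (((d + t : ℝ)) : AddCircle (1:ℝ)) = (u : AddCircle (1:ℝ)) := by
        rw [AddCircle.coe_add]
        rw [add_assoc] at hu
        exact add_left_cancel hu
      obtain ⟨k, hk⟩ := (addCircle_coe_eq_coe_iff _ _).mp hc
      have : u = d + t := int_diff_small k hk (by linarith) (by linarith)
      linarith
  · -- t > 1 - ε: t > d and t > 1-d: x+t not in arc, y+t in arc (as d+t-1 ∈ (0,d))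
    have htd : d < t := by
      have : ε ≤ 1 - d := min_le_right _ _
      linarith
    have htd' : 1 - d < t := by
      have : ε ≤ d := min_le_left _ _
      linarith
    right
    constructor
    · -- y + t = x + (d + t - 1), in arc
      refine (inOpenArc_iff x d hd0 hd1 _).mpr ⟨d + t - 1, by linarith, by linarith, ?_⟩
      rw [add_assoc]
      congr 1
      rw [← AddCircle.coe_add]
      rw [addCircle_coe_eq_coe_iff]
      exact ⟨-1, by push_cast; ring⟩
    · intro hmem
      obtain ⟨u, hu0, hud, hu⟩ := (inOpenArc_iff x d hd0 hd1 _).mp hmem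
      have hc : ((t : ℝ) : AddCircle (1:ℝ)) = (u : AddCircle (1:ℝ)) := add_left_cancel hu
      obtain ⟨k, hk⟩ := (addCircle_coe_eq_coe_iff _ _).mp hc
      have : u = t := int_diff_small k hk (by linarith) (by linarith)
      linarith
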